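/- arXiv:1512.08757 — 2 statements merged into one kernel-verified Lean document; each statement's English description precedes it below -/
import Mathlib

section
/- Let G = (V,E) be a finite simple graph and let uv ∈ E be a projectable edge of G, i.e., there exists a maximum stable set S of G with S ∩ {u,v} ≠ ∅. Then α(G) = α(G|{u,v}), where G|{u,v} is the clique projection of the clique {u,v}. -/
/-! A maximum stable set `S` of `G` meeting `{u, v}` stays stable in `G|{u,v}`: a new edge `ab`
with `a, b ∈ S` would make the vertex of `S ∩ {u, v}` adjacent to `a` or `b` in `G`. Since `G|{u,v}`
only adds edges, `α` cannot grow either. -/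

open Finset

variable {V : Type*}

/-- A stable (independent) set of a graph: pairwise non-adjacent vertices. -/
def IsStable (G : SimpleGraph V) (S : Finset V) : Prop :=
  ∀ u ∈ S, ∀ v ∈ S, ¬ G.Adj u v

/-- The characteristic vectors of stable sets of `G`. -/
def stableVecs [DecidableEq V] (G : SimpleGraph V) : Set (V → ℝ) :=
  {x | ∃ S : Finset V, IsStable G S ∧ x = fun v => if v ∈ S then (1 : ℝ) else 0}

/-- The stable set polytope `STAB(G)`. -/
def STAB [DecidableEq V] (G : SimpleGraph V) : Set (V → ℝ) :=
  convexHull ℝ (stableVecs G)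

/-- `x_W = ∑_{v ∈ W} x_v`. -/
def vsum (W : Finset V) (x : V → ℝ) : ℝ := ∑ v ∈ W, x v

/-- The clique projection `G|W`: add every non-edge `uv` with `W ⊆ N(u) ∪ N(v)`. -/
def cliqueProj (G : SimpleGraph V) (W : Finset V) : SimpleGraph V where
  Adj u v := G.Adj u v ∨ (u ≠ v ∧ ¬G.Adj u v ∧ ∀ w ∈ W, G.Adj w u ∨ G.Adj w v)
  symm := by
    constructor
    rintro u v (h | ⟨hne, hna, h⟩)
    · exact Or.inl h.symm
    · exact Or.inr ⟨hne.symm, fun h' => hna h'.symm, fun w hw => (h w hw).symm⟩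
  loopless := by
    constructor
    rintro u (h | ⟨hne, _, _⟩)
    · exact G.irrefl h
    · exact hne rfl

/-- Iterated projected graphs: `G_0 = G`, `G_t = G_{t-1} | W_t`. -/
def projSeq (G : SimpleGraph V) (W : ℕ → Finset V) : ℕ → SimpleGraph V
  | 0 => G
  | t + 1 => cliqueProj (projSeq G W t) (W (t + 1))

/-- `F_t = {x ∈ STAB(G) : x_{W_j} = 1, j = 1, …, t}`. -/
def Fface [DecidableEq V] (G : SimpleGraph V) (W : ℕ → Finset V) (t : ℕ) : Set (V → ℝ) :=
  {x ∈ STAB G | ∀ j ∈ Finset.Icc 1 t, vsum (W j) x = 1}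

/-- `α(G[H], c)`: the maximum `c`-weight of a stable set of `G` contained in `H`. -/
noncomputable def alphaW (G : SimpleGraph V) (H : Finset V) (c : V → ℝ) : ℝ :=
  sSup {r : ℝ | ∃ S : Finset V, S ⊆ H ∧ IsStable G S ∧ r = ∑ v ∈ S, c v}

/-- `α(G[H])`: the maximum cardinality of a stable set of `G` contained in `H`. -/
noncomputable def alphaOn (G : SimpleGraph V) (H : Finset V) : ℕ :=
  sSup {k : ℕ | ∃ S : Finset V, S ⊆ H ∧ IsStable G S ∧ S.card = k}

/-- The stability number `α(G)`. -/
noncomputable def alphaNum [Fintype V] (G : SimpleGraph V) : ℕ :=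
  sSup {k : ℕ | ∃ S : Finset V, IsStable G S ∧ S.card = k}

/-- `cᵀx`. -/
def dotp [Fintype V] (c x : V → ℝ) : ℝ := ∑ v, c v * x v

/-- The affine dimension of a set of points. -/
noncomputable def affDim (s : Set (V → ℝ)) : ℕ := Module.finrank ℝ (vectorSpan ℝ s)

/-- Strong hypertree (with hyperedges of size `k`). -/
inductive IsStrongHypertree [DecidableEq V] (k : ℕ) : Finset V → Finset (Finset V) → Prop
  | base (V' : Finset V) : IsStrongHypertree k V' {V'}
  | step (V' : Finset V) (E : Finset (Finset V)) (v : V) (Wi : Finset V) :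
      v ∈ V' → v ∈ Wi → Wi ∈ E →
      (∃ Wj ∈ E, Wj ≠ Wi ∧ (Wi ∩ Wj).card = k - 1) →
      IsStrongHypertree k (V'.erase v) (E.erase Wi) →
      IsStrongHypertree k V' E

/-- Condition (I): `|W_t| = k` and the subgraph of `G_{t-1}` induced by `W_1 ∪ ⋯ ∪ W_t`
is `k`-partite with stable vertex classes `V_t^1, …, V_t^k`. -/
def CondI [DecidableEq V] (G : SimpleGraph V) (W : ℕ → Finset V)
    (Vc : ℕ → ℕ → Finset V) (k t : ℕ) : Prop :=
  (W t).card = k ∧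
  (Finset.Icc 1 k).biUnion (Vc t) = (Finset.Icc 1 t).biUnion W ∧
  (∀ i ∈ Finset.Icc 1 k, ∀ j ∈ Finset.Icc 1 k, i ≠ j → Disjoint (Vc t i) (Vc t j)) ∧
  (∀ i ∈ Finset.Icc 1 k, ∀ u ∈ Vc t i, ∀ v ∈ Vc t i, ¬(projSeq G W (t - 1)).Adj u v)

/-- Condition (II): `T_t = (V_t, {W_1, …, W_t})` is a strong hypertree. -/
def CondII [DecidableEq V] (W : ℕ → Finset V) (Vc : ℕ → ℕ → Finset V) (k t : ℕ) : Prop :=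
  IsStrongHypertree k ((Finset.Icc 1 k).biUnion (Vc t)) ((Finset.Icc 1 t).image W)

/-- Condition (III): every `w ∉ V_t` misses some class `V_t^i` in `G_{t-1}`. -/
def CondIII [DecidableEq V] (G : SimpleGraph V) (W : ℕ → Finset V)
    (Vc : ℕ → ℕ → Finset V) (k t : ℕ) : Prop :=
  ∀ w : V, w ∉ (Finset.Icc 1 k).biUnion (Vc t) →
    ∃ i ∈ Finset.Icc 1 k, ∀ u ∈ Vc t i, ¬(projSeq G W (t - 1)).Adj w u

/-- Condition (IV). -/
def CondIV [Fintype V] [DecidableEq V] (G : SimpleGraph V) (W : ℕ → Finset V)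
    (Vc : ℕ → ℕ → Finset V) (k r : ℕ) : Prop :=
  ∀ i ∈ Finset.Icc 1 (k - 1), ∀ t ∈ Finset.Icc 1 r, ∀ v ∈ W t ∩ Vc t i,
    ∀ w ∈ Finset.univ \ (Finset.Icc 1 k).biUnion (Vc r),
      (∃ z ∈ Vc r i, (projSeq G W r).Adj z w) →
      (G.Adj v w ∨ ∃ t' ∈ Finset.Icc 1 r,
        (projSeq G W (t' - 1)).IsClique (W t : Set V) ∧
        W t ≠ W t' ∧ (W t ∩ W t').card = k - 1 ∧
        v ∉ W t' ∧ ∃ v' ∈ W t' ∩ Vc r i, (projSeq G W (t' - 1)).Adj v' w)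

/-- Condition (V): no vertex of `V_t^k` has a neighbor in `V_r^0` in the graph `G_r`. -/
def CondV [Fintype V] [DecidableEq V] (G : SimpleGraph V) (W : ℕ → Finset V)
    (Vc : ℕ → ℕ → Finset V) (k r t : ℕ) : Prop :=
  ∀ v ∈ Vc t k, ∀ w ∈ Finset.univ \ (Finset.Icc 1 k).biUnion (Vc r),
    ¬(projSeq G W r).Adj v w

/-- `STAB(G[H])`, embedded in `ℝ^V` (coordinates outside `H` are zero). -/
def STABon [DecidableEq V] (G : SimpleGraph V) (H : Finset V) : Set (V → ℝ) :=
  convexHull ℝ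
    {x | ∃ S : Finset V, S ⊆ H ∧ IsStable G S ∧ x = fun v => if v ∈ S then (1 : ℝ) else 0}

theorem IsStable.anti {G H : SimpleGraph V} (hGH : G ≤ H) {S : Finset V} (hS : IsStable H S) :
    IsStable G S :=
  fun a ha b hb hab => hS a ha b hb (hGH hab)

theorem le_cliqueProj (G : SimpleGraph V) (W : Finset V) : G ≤ cliqueProj G W :=
  fun _ _ => Or.inl

theorem IsStable.cliqueProj_of_inter_nonempty [DecidableEq V] {G : SimpleGraph V} {S W : Finset V}
    (hS : IsStable G S) (hSW : (S ∩ W).Nonempty) : IsStable (cliqueProj G W) S := by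
  obtain ⟨w, hw⟩ := hSW
  rw [mem_inter] at hw
  rintro a ha b hb (hab | ⟨-, -, hcover⟩)
  · exact hS a ha b hb hab
  · rcases hcover w hw.2 with hwa | hwb
    · exact hS w hw.1 a ha hwa
    · exact hS w hw.1 b hb hwb

section alphaNum

variable [Fintype V]

theorem bddAbove_stableCards (G : SimpleGraph V) :
    BddAbove {k : ℕ | ∃ S : Finset V, IsStable G S ∧ S.card = k} := by
  refine ⟨Fintype.card V, ?_⟩
  rintro _ ⟨S, -, rfl⟩
  exact S.card_le_univ

theorem IsStable.card_le_alphaNum {G : SimpleGraph V} {S : Finset V} (hS : IsStable G S) :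
    S.card ≤ alphaNum G :=
  le_csSup (bddAbove_stableCards G) ⟨S, hS, rfl⟩

theorem alphaNum_anti {G H : SimpleGraph V} (hGH : G ≤ H) : alphaNum H ≤ alphaNum G := by
  refine csSup_le ⟨0, ∅, fun a ha => absurd ha (notMem_empty a), card_empty⟩ ?_
  rintro _ ⟨S, hS, rfl⟩
  exact (hS.anti hGH).card_le_alphaNum

end alphaNum

theorem stmt1_general {V : Type*} [Fintype V] [DecidableEq V] (G : SimpleGraph V) (u v : V)
    (hproj : ∃ S : Finset V, IsStable G S ∧ S.card = alphaNum G ∧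
      (S ∩ ({u, v} : Finset V)).Nonempty) :
    alphaNum G = alphaNum (cliqueProj G {u, v}) := by
  obtain ⟨S, hS, hcard, hmeet⟩ := hproj
  refine le_antisymm ?_ (alphaNum_anti (le_cliqueProj G _))
  rw [← hcard]
  exact (hS.cliqueProj_of_inter_nonempty hmeet).card_le_alphaNum

/-- if `uv ∈ E` is projectable (some maximum stable set meets `{u,v}`),
then `α(G) = α(G|{u,v})`. -/
theorem stmt1 {V : Type*} [Fintype V] [DecidableEq V] (G : SimpleGraph V) (u v : V)
    (huv : G.Adj u v)
    (hproj : ∃ S : Finset V, IsStable G S ∧ S.card = alphaNum G ∧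
      (S ∩ ({u, v} : Finset V)).Nonempty) :
    alphaNum G = alphaNum (cliqueProj G {u, v}) :=
  stmt1_general G u v hproj
end

section
/- Let G = (V,E) be a finite simple graph with n = |V|, let W ⊆ V be a clique of G, and let c ∈ ℝ^V, d ∈ ℝ be such that the inequality cᵀx ≤ d is valid for F_W = {x ∈ STAB(G) : x_W = 1}, with support H = {v ∈ V : c_v ≠ 0}. Then for every λ ∈ ℝ with λ ≤ d − α(G[H \ W], c), the lifted inequality f(x) = (cᵀx − d) − λ(x_W − 1) ≤ 0 is valid for STAB(G). -/
open Finset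

variable {V : Type*}

/-! The lifted inequality is linear, so it suffices to check it at the incidence vector of a
stable set `S`; since `W` is a clique, `S` meets `W` in at most one vertex. If it meets `W`,
validity on `F_W` applies; if not, `cᵀx ≤ α(G[H \ W], c) ≤ d - λ`. -/

section Lifting

lemma isLinearMap_vsum (W : Finset V) : IsLinearMap ℝ (vsum W) where
  map_add x y := by simp only [vsum, Pi.add_apply, sum_add_distrib]
  map_smul a x := by simp only [vsum, Pi.smul_apply, smul_eq_mul, mul_sum]

lemma isLinearMap_dotp [Fintype V] (c : V → ℝ) : IsLinearMap ℝ (dotp c) where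
  map_add x y := by simp only [dotp, Pi.add_apply, mul_add, sum_add_distrib]
  map_smul a x := by simp only [dotp, Pi.smul_apply, smul_eq_mul, mul_sum, mul_left_comm]

lemma IsLinearMap.le_on_convexHull {E : Type*} [AddCommGroup E] [Module ℝ E]
    {f : E → ℝ} (hf : IsLinearMap ℝ f) {s : Set E} {r : ℝ} (h : ∀ x ∈ s, f x ≤ r) :
    ∀ x ∈ convexHull ℝ s, f x ≤ r :=
  fun _ hx => convexHull_min h (convex_halfSpace_le hf r) hx

lemma vsum_ite_mem [DecidableEq V] (W S : Finset V) :
    vsum W (fun v => if v ∈ S then (1 : ℝ) else 0) = #(W ∩ S) := by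
  simp [vsum, sum_ite_mem]

lemma dotp_ite_mem [Fintype V] [DecidableEq V] (c : V → ℝ) (S : Finset V) :
    dotp c (fun v => if v ∈ S then (1 : ℝ) else 0) = ∑ v ∈ S, c v := by
  simp [dotp, sum_ite_mem]

lemma IsStable.mono {G : SimpleGraph V} {S T : Finset V} (hT : IsStable G T) (hST : S ⊆ T) :
    IsStable G S :=
  fun u hu v hv => hT u (hST hu) v (hST hv)

lemma IsStable.card_inter_le_one {G : SimpleGraph V} [DecidableEq V] {S W : Finset V}
    (hS : IsStable G S) (hW : G.IsClique (W : Set V)) : #(W ∩ S) ≤ 1 := by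
  refine card_le_one.mpr fun u hu v hv => ?_
  rw [mem_inter] at hu hv
  by_contra huv
  exact hS u hu.2 v hv.2 (hW hu.1 hv.1 huv)

lemma le_alphaW {G : SimpleGraph V} {H S : Finset V} (c : V → ℝ) (hSH : S ⊆ H)
    (hS : IsStable G S) : ∑ v ∈ S, c v ≤ alphaW G H c := by
  have hbdd : BddAbove {r : ℝ | ∃ T : Finset V, T ⊆ H ∧ IsStable G T ∧ r = ∑ v ∈ T, c v} := by
    refine ((H.powerset.image fun T => ∑ v ∈ T, c v).finite_toSet).bddAbove.mono ?_
    rintro _ ⟨T, hTH, -, rfl⟩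
    exact mem_coe.mpr (mem_image_of_mem _ (mem_powerset.mpr hTH))
  exact le_csSup hbdd ⟨S, hSH, hS, rfl⟩

lemma sum_le_alphaW_support_sdiff [Fintype V] [DecidableEq V] {G : SimpleGraph V}
    {S W : Finset V} (c : V → ℝ) (hS : IsStable G S) (hSW : Disjoint W S) :
    ∑ v ∈ S, c v ≤ alphaW G ((univ.filter fun v => c v ≠ 0) \ W) c := by
  rw [← sum_filter_ne_zero]
  refine le_alphaW c (fun v hv => ?_) (hS.mono (filter_subset _ _))
  rw [mem_filter] at hv
  exact mem_sdiff.mpr ⟨mem_filter.mpr ⟨mem_univ v, hv.2⟩,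
    fun hvW => disjoint_left.mp hSW hvW hv.1⟩

end Lifting

/-- the lifting lemma (validity part). -/
theorem stmt2 {V : Type*} [Fintype V] [DecidableEq V] (G : SimpleGraph V)
    (W : Finset V) (hW : G.IsClique (W : Set V)) (c : V → ℝ) (d lam : ℝ)
    (hvalid : ∀ x ∈ STAB G, vsum W x = 1 → dotp c x ≤ d)
    (hlam : lam ≤ d - alphaW G ((Finset.univ.filter fun v => c v ≠ 0) \ W) c) :
    ∀ x ∈ STAB G, (dotp c x - d) - lam * (vsum W x - 1) ≤ 0 := by
  have hlin : IsLinearMap ℝ fun x => dotp c x - lam * vsum W x :=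
    ((isLinearMap_dotp c).mk' _ - lam • (isLinearMap_vsum W).mk' _).isLinear
  suffices h : ∀ x ∈ STAB G, dotp c x - lam * vsum W x ≤ d - lam by
    intro x hx
    linarith [h x hx]
  refine hlin.le_on_convexHull ?_
  rintro _ ⟨S, hS, rfl⟩
  have hxS : (fun v => if v ∈ S then (1 : ℝ) else 0) ∈ STAB G :=
    subset_convexHull ℝ _ ⟨S, hS, rfl⟩
  have hvs := vsum_ite_mem W S
  rcases Nat.le_one_iff_eq_zero_or_eq_one.mp (hS.card_inter_le_one hW) with h0 | h1
  · have hdisj : Disjoint W S := disjoint_iff_inter_eq_empty.mpr (card_eq_zero.mp h0)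
    rw [h0, Nat.cast_zero] at hvs
    rw [dotp_ite_mem, hvs]
    linarith [sum_le_alphaW_support_sdiff c hS hdisj]
  · rw [h1, Nat.cast_one] at hvs
    rw [hvs]
    linarith [hvalid _ hxS hvs]
end
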